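/- The two first integrals H1 and H2 of the map (P.iv) are in involution: {H1, H2} = 0 with respect to the Poisson bracket on coordinates (w0,w1,w2,w3) defined by {w0,w1}=0, {w1,w2}=0, {w2,w3}=0, {w0,w2}=1/w1, {w1,w3}=1/w2, {w0,w3} = -(w0+2*w1+2*w2+w3+ν)/(w1*w2). -/
import Mathlib


noncomputable def D0 (F : ℝ → ℝ → ℝ → ℝ → ℝ) (w0 w1 w2 w3 : ℝ) : ℝ :=
  deriv (fun t => F t w1 w2 w3) w0
noncomputable def D1 (F : ℝ → ℝ → ℝ → ℝ → ℝ) (w0 w1 w2 w3 : ℝ) : ℝ :=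
  deriv (fun t => F w0 t w2 w3) w1
noncomputable def D2 (F : ℝ → ℝ → ℝ → ℝ → ℝ) (w0 w1 w2 w3 : ℝ) : ℝ :=
  deriv (fun t => F w0 w1 t w3) w2
noncomputable def D3 (F : ℝ → ℝ → ℝ → ℝ → ℝ) (w0 w1 w2 w3 : ℝ) : ℝ :=
  deriv (fun t => F w0 w1 w2 t) w3

noncomputable def pbIv (nu : ℝ) (F G : ℝ → ℝ → ℝ → ℝ → ℝ) (w0 w1 w2 w3 : ℝ) : ℝ :=
  (1 / w1) * (D0 F w0 w1 w2 w3 * D2 G w0 w1 w2 w3 - D2 F w0 w1 w2 w3 * D0 G w0 w1 w2 w3)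
  + (1 / w2) * (D1 F w0 w1 w2 w3 * D3 G w0 w1 w2 w3 - D3 F w0 w1 w2 w3 * D1 G w0 w1 w2 w3)
  + (-(w0 + 2*w1 + 2*w2 + w3 + nu) / (w1 * w2)) * (D0 F w0 w1 w2 w3 * D3 G w0 w1 w2 w3 - D3 F w0 w1 w2 w3 * D0 G w0 w1 w2 w3)

noncomputable def H1iv (a b nu w0 w1 w2 w3 : ℝ) : ℝ :=
  w1*w2*(w2*w3 + w0*w1 - w0*w3 + (w1+w2)^2 + nu*(w1+w2) + b) + a*(w1+w2)

noncomputable def H2iv (a b nu w0 w1 w2 w3 : ℝ) : ℝ :=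
  w1*w2*( w0^2*w1 + w3^2*w2 + w0*w3*(w1+w2) + w0*(w2^2+2*w1^2) + w3*(w1^2+2*w2^2) + 3*(w0+w3)*w1*w2 + (w1+w2)^3 + nu*(w0*w3 + (w0+w3)*(w1+w2) + (w1+w2)^2) + b*(w0+w1+w2+w3) ) + a*(w0*w1 + w3*w2 + (w1+w2)^2)


lemma deriv_poly4 (A B C D E t : ℝ) :
    deriv (fun x => A + B*x + C*x^2 + D*x^3 + E*x^4) t
      = B + 2*C*t + 3*D*t^2 + 4*E*t^3 := by
  have h : HasDerivAt (fun x : ℝ => A + B*x + C*x^2 + D*x^3 + E*x^4)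
      (B*1 + C*((2:ℕ)*t^(2-1)) + D*((3:ℕ)*t^(3-1)) + E*((4:ℕ)*t^(4-1))) t :=
    ((((hasDerivAt_id t).const_mul B).const_add A).add
      ((hasDerivAt_pow 2 t).const_mul C)).add
      ((hasDerivAt_pow 3 t).const_mul D) |>.add ((hasDerivAt_pow 4 t).const_mul E)
  rw [h.deriv]; push_cast; ring

theorem stmt2 (a b nu w0 w1 w2 w3 : ℝ) (h : w1 * w2 ≠ 0) :
    pbIv nu (H1iv a b nu) (H2iv a b nu) w0 w1 w2 w3 = 0 := by
  have hD0H1 : D0 (H1iv a b nu) w0 w1 w2 w3 = -w1*w2*w3 + w1^2*w2 := by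
    have hf : (fun t => H1iv a b nu t w1 w2 w3) = fun t => (w1*w2^2*w3 + w1*w2^3 + 2*w1^2*w2^2 + w1^3*w2 + nu*w1*w2^2 + nu*w1^2*w2 + b*w1*w2 + a*w2 + a*w1) + (-w1*w2*w3 + w1^2*w2)*t + (0)*t^2 + (0)*t^3 + (0)*t^4 := by
      funext t; simp only [H1iv]; ring
    simp only [D0]; rw [hf, deriv_poly4]; ring
  have hD1H1 : D1 (H1iv a b nu) w0 w1 w2 w3 = w2^2*w3 + w2^3 + 4*w1*w2^2 + 3*w1^2*w2 - w0*w2*w3 + 2*w0*w1*w2 + nu*w2^2 + 2*nu*w1*w2 + b*w2 + a := by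
    have hf : (fun t => H1iv a b nu w0 t w2 w3) = fun t => (a*w2) + (w2^2*w3 + w2^3 - w0*w2*w3 + nu*w2^2 + b*w2 + a)*t + (2*w2^2 + w0*w2 + nu*w2)*t^2 + (w2)*t^3 + (0)*t^4 := by
      funext t; simp only [H1iv]; ring
    simp only [D1]; rw [hf, deriv_poly4]; ring
  have hD2H1 : D2 (H1iv a b nu) w0 w1 w2 w3 = 2*w1*w2*w3 + 3*w1*w2^2 + 4*w1^2*w2 + w1^3 - w0*w1*w3 + w0*w1^2 + 2*nu*w1*w2 + nu*w1^2 + b*w1 + a := by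
    have hf : (fun t => H1iv a b nu w0 w1 t w3) = fun t => (a*w1) + (w1^3 - w0*w1*w3 + w0*w1^2 + nu*w1^2 + b*w1 + a)*t + (w1*w3 + 2*w1^2 + nu*w1)*t^2 + (w1)*t^3 + (0)*t^4 := by
      funext t; simp only [H1iv]; ring
    simp only [D2]; rw [hf, deriv_poly4]; ring
  have hD3H1 : D3 (H1iv a b nu) w0 w1 w2 w3 = w1*w2^2 - w0*w1*w2 := by
    have hf : (fun t => H1iv a b nu w0 w1 w2 t) = fun t => (w1*w2^3 + 2*w1^2*w2^2 + w1^3*w2 + w0*w1^2*w2 + nu*w1*w2^2 + nu*w1^2*w2 + b*w1*w2 + a*w2 + a*w1) + (w1*w2^2 - w0*w1*w2)*t + (0)*t^2 + (0)*t^3 + (0)*t^4 := by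
      funext t; simp only [H1iv]; ring
    simp only [D3]; rw [hf, deriv_poly4]; ring
  have hD0H2 : D0 (H2iv a b nu) w0 w1 w2 w3 = w1*w2^2*w3 + w1*w2^3 + w1^2*w2*w3 + 3*w1^2*w2^2 + 2*w1^3*w2 + 2*w0*w1^2*w2 + nu*w1*w2*w3 + nu*w1*w2^2 + nu*w1^2*w2 + b*w1*w2 + a*w1 := by
    have hf : (fun t => H2iv a b nu t w1 w2 w3) = fun t => (w1*w2^2*w3^2 + 2*w1*w2^3*w3 + w1*w2^4 + 3*w1^2*w2^2*w3 + 3*w1^2*w2^3 + w1^3*w2*w3 + 3*w1^3*w2^2 + w1^4*w2 + nu*w1*w2^2*w3 + nu*w1*w2^3 + nu*w1^2*w2*w3 + 2*nu*w1^2*w2^2 + nu*w1^3*w2 + b*w1*w2*w3 + b*w1*w2^2 + b*w1^2*w2 + a*w2*w3 + a*w2^2 + 2*a*w1*w2 + a*w1^2) + (w1*w2^2*w3 + w1*w2^3 + w1^2*w2*w3 + 3*w1^2*w2^2 + 2*w1^3*w2 + nu*w1*w2*w3 + nu*w1*w2^2 + nu*w1^2*w2 + b*w1*w2 + a*w1)*t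 + (w1^2*w2)*t^2 + (0)*t^3 + (0)*t^4 := by
      funext t; simp only [H2iv]; ring
    simp only [D0]; rw [hf, deriv_poly4]; ring
  have hD1H2 : D1 (H2iv a b nu) w0 w1 w2 w3 = w2^2*w3^2 + 2*w2^3*w3 + w2^4 + 6*w1*w2^2*w3 + 6*w1*w2^3 + 3*w1^2*w2*w3 + 9*w1^2*w2^2 + 4*w1^3*w2 + w0*w2^2*w3 + w0*w2^3 + 2*w0*w1*w2*w3 + 6*w0*w1*w2^2 + 6*w0*w1^2*w2 + 2*w0^2*w1*w2 + nu*w2^2*w3 + nu*w2^3 + 2*nu*w1*w2*w3 + 4*nu*w1*w2^2 + 3*nu*w1^2*w2 + nu*w0*w2*w3 + nu*w0*w2^2 + 2*nu*w0*w1*w2 + b*w2*w3 + b*w2^2 + 2*b*w1*w2 + b*w0*w2 + 2*a*w2 + 2*a*w1 + a*w0 := by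
    have hf : (fun t => H2iv a b nu w0 t w2 w3) = fun t => (a*w2*w3 + a*w2^2) + (w2^2*w3^2 + 2*w2^3*w3 + w2^4 + w0*w2^2*w3 + w0*w2^3 + nu*w2^2*w3 + nu*w2^3 + nu*w0*w2*w3 + nu*w0*w2^2 + b*w2*w3 + b*w2^2 + b*w0*w2 + 2*a*w2 + a*w0)*t + (3*w2^2*w3 + 3*w2^3 + w0*w2*w3 + 3*w0*w2^2 + w0^2*w2 + nu*w2*w3 + 2*nu*w2^2 + nu*w0*w2 + b*w2 + a)*t^2 + (w2*w3 + 3*w2^2 + 2*w0*w2 + nu*w2)*t^3 + (w2)*t^4 := by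
      funext t; simp only [H2iv]; ring
    simp only [D1]; rw [hf, deriv_poly4]; ring
  have hD2H2 : D2 (H2iv a b nu) w0 w1 w2 w3 = 2*w1*w2*w3^2 + 6*w1*w2^2*w3 + 4*w1*w2^3 + 6*w1^2*w2*w3 + 9*w1^2*w2^2 + w1^3*w3 + 6*w1^3*w2 + w1^4 + 2*w0*w1*w2*w3 + 3*w0*w1*w2^2 + w0*w1^2*w3 + 6*w0*w1^2*w2 + 2*w0*w1^3 + w0^2*w1^2 + 2*nu*w1*w2*w3 + 3*nu*w1*w2^2 + nu*w1^2*w3 + 4*nu*w1^2*w2 + nu*w1^3 + nu*w0*w1*w3 + 2*nu*w0*w1*w2 + nu*w0*w1^2 + b*w1*w3 + 2*b*w1*w2 + b*w1^2 + b*w0*w1 + a*w3 + 2*a*w2 + 2*a*w1 := by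
    have hf : (fun t => H2iv a b nu w0 w1 t w3) = fun t => (a*w1^2 + a*w0*w1) + (w1^3*w3 + w1^4 + w0*w1^2*w3 + 2*w0*w1^3 + w0^2*w1^2 + nu*w1^2*w3 + nu*w1^3 + nu*w0*w1*w3 + nu*w0*w1^2 + b*w1*w3 + b*w1^2 + b*w0*w1 + a*w3 + 2*a*w1)*t + (w1*w3^2 + 3*w1^2*w3 + 3*w1^3 + w0*w1*w3 + 3*w0*w1^2 + nu*w1*w3 + 2*nu*w1^2 + nu*w0*w1 + b*w1 + a)*t^2 + (2*w1*w3 + 3*w1^2 + w0*w1 + nu*w1)*t^3 + (w1)*t^4 := by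
      funext t; simp only [H2iv]; ring
    simp only [D2]; rw [hf, deriv_poly4]; ring
  have hD3H2 : D3 (H2iv a b nu) w0 w1 w2 w3 = 2*w1*w2^2*w3 + 2*w1*w2^3 + 3*w1^2*w2^2 + w1^3*w2 + w0*w1*w2^2 + w0*w1^2*w2 + nu*w1*w2^2 + nu*w1^2*w2 + nu*w0*w1*w2 + b*w1*w2 + a*w2 := by
    have hf : (fun t => H2iv a b nu w0 w1 w2 t) = fun t => (w1*w2^4 + 3*w1^2*w2^3 + 3*w1^3*w2^2 + w1^4*w2 + w0*w1*w2^3 + 3*w0*w1^2*w2^2 + 2*w0*w1^3*w2 + w0^2*w1^2*w2 + nu*w1*w2^3 + 2*nu*w1^2*w2^2 + nu*w1^3*w2 + nu*w0*w1*w2^2 + nu*w0*w1^2*w2 + b*w1*w2^2 + b*w1^2*w2 + b*w0*w1*w2 + a*w2^2 + 2*a*w1*w2 + a*w1^2 + a*w0*w1) + (2*w1*w2^3 + 3*w1^2*w2^2 + w1^3*w2 + w0*w1*w2^2 + w0*w1^2*w2 + nu*w1*w2^2 + nu*w1^2*w2 + nu*w0*w1*w2 + b*w1*w2 + a*w2)*t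 + (w1*w2^2)*t^2 + (0)*t^3 + (0)*t^4 := by
      funext t; simp only [H2iv]; ring
    simp only [D3]; rw [hf, deriv_poly4]; ring
  simp only [pbIv]
  rw [hD0H1, hD1H1, hD2H1, hD3H1, hD0H2, hD1H2, hD2H2, hD3H2]
  have h1 : w1 ≠ 0 := left_ne_zero_of_mul h
  have h2 : w2 ≠ 0 := right_ne_zero_of_mul h
  field_simp
  ring
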